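/- arXiv:0807.0167 — 4 statements merged into one kernel-verified Lean document; each statement's English description precedes it below -/
import Mathlib

section
/- If G is a finite Frobenius group with abelian Frobenius complement, then G is a Camina group. -/
/-!
If `g` centralizes no nontrivial element of a finite normal subgroup `K`, conjugation by `g` is a
fixed-point-free automorphism of `K`, so the commutator map `c ↦ ⁅c, g⁆` is injective, hence
bijective, on `K`. Thus `gK` is contained in the conjugacy class of `g`, and `K ≤ G'`.
In a Frobenius group this applies to the kernel `K` and every `g ∉ K`; an abelian complement
makes `G/K` abelian, so `G' = K` and the classes outside `G'` are the full cosets `gG'`.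
-/

def IsCamina (G : Type*) [Group G] : Prop :=
  (¬ ∀ a b : G, a * b = b * a) ∧
    ∀ g : G, g ∉ commutator G →
      {x : G | IsConj g x} = (fun c => g * c) '' (commutator G : Set G)

open scoped commutatorElement

section

variable {G : Type*} [Group G]

theorem fixedPointFree_conjNormal {K : Subgroup G} [K.Normal] {g : G}
    (hg : ∀ k ∈ K, Commute g k → k = 1) :
    MonoidHom.FixedPointFree (MulAut.conjNormal g : MulAut K) := by
  intro k hk
  refine Subtype.ext (hg k k.2 ?_)
  have hk' : g * k * g⁻¹ = k := by rw [← MulAut.conjNormal_apply, hk]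
  exact mul_inv_eq_iff_eq_mul.mp hk'

theorem exists_mem_conj_eq_mul {K : Subgroup G} [K.Normal] [Finite K] {g : G}
    (hg : ∀ k ∈ K, Commute g k → k = 1) {k : G} (hk : k ∈ K) :
    ∃ c ∈ K, c * g * c⁻¹ = g * k := by
  let φ : MulAut K := MulAut.conjNormal g
  obtain ⟨c, hc⟩ := (fixedPointFree_conjNormal hg).commutatorMap_surjective (φ ⟨k, hk⟩)
  have hc' : (c : G) / (g * c * g⁻¹) = g * k * g⁻¹ := by
    simpa [φ, MulAut.conjNormal_apply] using congrArg Subtype.val hc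
  refine ⟨c, c.2, ?_⟩
  calc (c : G) * g * (c : G)⁻¹ = c / (g * c * g⁻¹) * g := by rw [div_eq_mul_inv]; group
    _ = g * k := by rw [hc']; group

theorem le_commutator_of_forall_commute {K : Subgroup G} [K.Normal] [Finite K] {g : G}
    (hg : ∀ k ∈ K, Commute g k → k = 1) : K ≤ commutator G := by
  intro k hk
  obtain ⟨c, -, hc⟩ := exists_mem_conj_eq_mul hg hk
  have hk' : k = ⁅g⁻¹, c⁆ :=
    calc k = g⁻¹ * (c * g * c⁻¹) := by rw [hc, inv_mul_cancel_left]
      _ = ⁅g⁻¹, c⁆ := by group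
  rw [hk']
  exact Subgroup.commutator_mem_commutator (Subgroup.mem_top _) (Subgroup.mem_top _)

theorem inv_mul_mem_commutator_of_isConj {g x : G} (h : IsConj g x) :
    g⁻¹ * x ∈ commutator G := by
  obtain ⟨c, rfl⟩ := isConj_iff.mp h
  have hx : g⁻¹ * (c * g * c⁻¹) = ⁅g⁻¹, c⁆ := by group
  rw [hx]
  exact Subgroup.commutator_mem_commutator (Subgroup.mem_top _) (Subgroup.mem_top _)

theorem isCamina_of_forall_commute [Finite (commutator G)] (hne : commutator G ≠ ⊥)
    (h : ∀ g ∉ commutator G, ∀ k ∈ commutator G, Commute g k → k = 1) : IsCamina G := by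
  refine ⟨fun hcomm => hne ((commutator_eq_bot_iff G).mpr ⟨⟨hcomm⟩⟩), fun g hg => ?_⟩
  ext x
  constructor
  · intro hx
    exact ⟨g⁻¹ * x, inv_mul_mem_commutator_of_isConj hx, mul_inv_cancel_left g x⟩
  · rintro ⟨k, hk, rfl⟩
    obtain ⟨c, -, hc⟩ := exists_mem_conj_eq_mul (h g hg) hk
    exact isConj_iff.mpr ⟨c, hc⟩

end

/-- A finite Frobenius group (kernel `K`, complement `H`) with abelian Frobenius
complement is a Camina group. -/
theorem frobenius_abelian_complement_isCamina (G : Type*) [Group G] [Fintype G]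
    (K H : Subgroup G) (hKn : K.Normal) (hKbot : K ≠ ⊥) (hHbot : H ≠ ⊥)
    (hmeet : K ⊓ H = ⊥) (hjoin : K ⊔ H = ⊤)
    (hcent : ∀ k ∈ K, k ≠ 1 → Subgroup.centralizer {k} ≤ K)
    (hab : ∀ a b : H, a * b = b * a) :
    IsCamina G := by
  have hfpf : ∀ g ∉ K, ∀ k ∈ K, Commute g k → k = 1 := fun g hg k hk hgk =>
    of_not_not fun hk1 => hg (hcent k hk hk1 (Subgroup.mem_centralizer_singleton_iff.mpr hgk))
  obtain ⟨h, hH, hh1⟩ := H.bot_or_exists_ne_one.resolve_left hHbot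
  have hhK : (h : G) ∉ K := fun hK =>
    hh1 (Subgroup.mem_bot.mp (hmeet ▸ Subgroup.mem_inf.mpr ⟨hK, hH⟩))
  have hKG : commutator G = K :=
    le_antisymm (Subgroup.Normal.commutator_le_of_self_sup_commutative_eq_top hjoin ⟨⟨hab⟩⟩)
      (le_commutator_of_forall_commute (hfpf h hhK))
  exact isCamina_of_forall_commute (hKG ▸ hKbot) (hKG ▸ hfpf)
end

section
/- A finite nonabelian group G is a Camina group if and only if every nonlinear irreducible complex character of G vanishes on G \ G'. -/
open CategoryTheory

open Module
open scoped commutatorElement MonoidAlgebra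

universe u

theorem MonoidHom.commutatorElement_mem_ker_iff {G M : Type*} [Group G] [Monoid M]
    (φ : G →* M) (a b : G) : ⁅a, b⁆ ∈ φ.ker ↔ Commute (φ a) (φ b) := by
  rw [mem_ker, ← φ.coe_toHomUnits, ← Units.val_one, Units.val_inj, map_commutatorElement,
    commutatorElement_eq_one_iff_commute]
  exact Commute.units_val_iff.symm

theorem MonoidHom.commutator_le_ker_iff {G M : Type*} [Group G] [Monoid M] (φ : G →* M) :
    commutator G ≤ φ.ker ↔ ∀ a b, Commute (φ a) (φ b) := by
  simp [commutator_def, Subgroup.commutator_le, φ.commutatorElement_mem_ker_iff]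

theorem Module.End.commute_of_finrank_eq_one {k V : Type*} [Field k] [AddCommGroup V]
    [Module k V] (h : finrank k V = 1) (f g : Module.End k V) : Commute f g := by
  obtain ⟨a, rfl, -⟩ := f.existsUnique_eq_smul_id_of_finrank_eq_one h
  obtain ⟨b, rfl, -⟩ := g.existsUnique_eq_smul_id_of_finrank_eq_one h
  exact ((Commute.refl _).smul_left a).smul_right b

namespace Abelianization

variable {G : Type*} [Group G]

theorem of_eq_one_iff {x : G} : of x = 1 ↔ x ∈ commutator G := by
  rw [← ker_of, MonoidHom.mem_ker]

theorem of_eq_of_isConj {g x : G} (h : IsConj g x) : of x = of g := by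
  obtain ⟨c, rfl⟩ := isConj_iff.mp h
  simp

theorem image_mul_left_commutator (g : G) :
    (g * ·) '' (commutator G : Set G) = {x | of x = of g} := by
  ext x
  simp only [Set.mem_image, SetLike.mem_coe, Set.mem_ofPred_eq, MonoidHom.eq_iff, ker_of]
  exact ⟨by rintro ⟨c, hc, rfl⟩; simpa using hc, fun hx => ⟨g⁻¹ * x, hx, by group⟩⟩

theorem setOf_isConj_eq_image_mul_commutator_iff (g : G) :
    {x : G | IsConj g x} = (g * ·) '' (commutator G : Set G) ↔
      ∀ x, of x = of g → IsConj g x := by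
  rw [image_mul_left_commutator, Set.Subset.antisymm_iff]
  exact and_iff_right fun _ => of_eq_of_isConj

end Abelianization

theorem MonoidAlgebra.commute_sum_smul_of {k G : Type*} [CommSemiring k] [Group G] [Fintype G]
    {f : G → k} (hf : ∀ g x, f (g * x * g⁻¹) = f x) (a : k[G]) :
    Commute (∑ x, f x • MonoidAlgebra.of k G x) a := by
  induction a using MonoidAlgebra.induction_on with
  | of g =>
    rw [Commute, SemiconjBy, Finset.sum_mul, Finset.mul_sum]
    refine Fintype.sum_equiv (MulAut.conj g⁻¹).toEquiv _ _ fun x => ?_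
    have hfx : f (g⁻¹ * x * g) = f x := by simpa using hf g⁻¹ x
    simp only [MulEquiv.toEquiv_eq_coe, EquivLike.coe_coe, MulAut.conj_apply, inv_inv, hfx,
      smul_mul_assoc, mul_smul_comm, ← map_mul]
    congr 2
    group
  | add a b ha hb => exact ha.add_right hb
  | smul r a ha => exact ha.smul_right r

namespace Representation

variable {k G : Type*} [Field k] [Monoid G]
variable (M : Type*) [AddCommGroup M] [Module k M] [Module k[G] M] [IsScalarTower k k[G] M]

theorem asAlgebraHom_ofModule' :
    (ofModule' M).asAlgebraHom = Algebra.lsmul k k (A := k[G]) M :=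
  (MonoidAlgebra.lift k _ G).apply_symm_apply _

theorem isIrreducible_ofModule' [IsSimpleModule k[G] M] :
    (ofModule' (k := k) (G := G) M).IsIrreducible := by
  let e : (ofModule' (k := k) (G := G) M).asModule ≃ₗ[k[G]] M :=
    { (ofModule' M).asModuleEquiv with
      map_smul' := fun r x => by simp [asModuleEquiv_map_smul, asAlgebraHom_ofModule'] }
  exact (irreducible_iff_isSimpleModule_asModule _).mpr (IsSimpleModule.congr e)

end Representation

namespace FDRep

variable {k G : Type u} [Field k] [Group G]

theorem character_eq_of_isConj (V : FDRep k G) {g x : G} (h : IsConj g x) :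
    V.character x = V.character g := by
  obtain ⟨c, rfl⟩ := isConj_iff.mp h
  exact char_conj V g c

theorem character_eq_of_finrank_eq_one (V : FDRep k G) (hV : finrank k V = 1) {g x : G}
    (h : Abelianization.of x = Abelianization.of g) : V.character x = V.character g := by
  have hker :=
    V.ρ.commutator_le_ker_iff.mpr fun _ _ => Module.End.commute_of_finrank_eq_one hV _ _
  rw [MonoidHom.eq_iff, Abelianization.ker_of] at h
  rw [← mul_inv_cancel_left g x, character, map_mul, MonoidHom.mem_ker.mp (hker h), mul_one]
  rfl

theorem nontrivial_of_simple (V : FDRep k G) [Simple V] : Nontrivial V := by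
  by_contra h
  rw [not_nontrivial_iff_subsingleton] at h
  exact id_nonzero V (by ext; exact Subsingleton.elim _ _)

theorem simple_of_isIrreducible {V : Type u} [AddCommGroup V] [Module k V]
    [FiniteDimensional k V] (ρ : Representation k G V) [ρ.IsIrreducible] :
    Simple (FDRep.of ρ) := by
  let F := forget₂ (FDRep k G) (Rep k G) ⋙ Rep.equivalenceModuleMonoidAlgebra.functor
  have : Simple (F.obj (FDRep.of ρ)) := by
    rw [simple_iff_isSimpleModule']
    exact (ρ.irreducible_iff_isSimpleModule_asModule).mp inferInstance
  exact F.simple_of_simple_obj _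

theorem simple_of_ofModule' (M : Type u) [AddCommGroup M] [Module k M] [FiniteDimensional k M]
    [Module k[G] M] [IsScalarTower k k[G] M] [IsSimpleModule k[G] M] :
    Simple (FDRep.of (Representation.ofModule' (k := k) (G := G) M)) :=
  have := Representation.isIrreducible_ofModule' (k := k) (G := G) M
  simple_of_isIrreducible _

variable [IsAlgClosed k]

theorem exists_eq_smul_one_of_commute (V : FDRep k G) [Simple V]
    (f : Module.End k V) (hf : ∀ g, Commute f (V.ρ g)) : ∃ c : k, f = c • 1 := by
  let φ : V ⟶ V :=
    ⟨FGModuleCat.ofHom f, fun g => by ext v; exact LinearMap.congr_fun (hf g).eq v⟩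
  obtain ⟨c, hc⟩ := endomorphism_simple_eq_smul_id k φ
  exact ⟨c, by ext v; exact (congrArg (fun ψ : V ⟶ V => ψ.hom.hom v) hc).symm⟩

theorem finrank_eq_one_of_commute (V : FDRep k G) [Simple V]
    (h : ∀ a b, Commute (V.ρ a) (V.ρ b)) : finrank k V = 1 := by
  have := nontrivial_of_simple V
  have hscalar (f : Module.End k V) : ∃ c : k, f = c • 1 := by
    refine V.exists_eq_smul_one_of_commute f fun a => ?_
    obtain ⟨c, hc⟩ := V.exists_eq_smul_one_of_commute (V.ρ a) (h a)
    exact hc ▸ (Commute.one_right f).smul_right c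
  have hEnd : finrank k (Module.End k V) = 1 :=
    (finrank_eq_one_iff_of_nonzero' 1 one_ne_zero).mpr fun f =>
      (hscalar f).imp fun c hc => hc.symm
  exact Nat.eq_one_of_mul_eq_one_right ((Module.finrank_linearMap k k V V).symm.trans hEnd)

theorem sum_subgroup_eq_zero_or_le_ker (V : FDRep k G) [Simple V]
    (N : Subgroup G) [N.Normal] [Fintype N] :
    ∑ c : N, V.ρ c = 0 ∨ N ≤ V.ρ.ker := by
  have hcomm (g : G) : Commute (∑ c : N, V.ρ c) (V.ρ g) := by
    rw [Commute, SemiconjBy, Finset.sum_mul, Finset.mul_sum]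
    refine Fintype.sum_equiv (MulAut.conjNormal g⁻¹).toEquiv _ _ fun c => ?_
    simp only [MulEquiv.toEquiv_eq_coe, EquivLike.coe_coe, MulAut.conjNormal_apply, ← map_mul]
    group
  obtain ⟨a, ha⟩ := V.exists_eq_smul_one_of_commute _ hcomm
  rcases eq_or_ne a 0 with rfl | ha0
  · exact Or.inl (by simpa using ha)
  refine Or.inr fun d hd => ?_
  have hfix : V.ρ d * ∑ c : N, V.ρ c = ∑ c : N, V.ρ c :=
    Representation.self_comp_norm (V.ρ.comp N.subtype) ⟨d, hd⟩
  rw [ha, mul_smul_comm, mul_one] at hfix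
  exact smul_right_injective _ ha0 hfix

variable [CharZero k]

theorem asAlgebraHom_eq_zero_of_trace_eq_zero (V : FDRep k G) [Simple V] {z : k[G]}
    (hz : ∀ g, Commute z (MonoidAlgebra.of k G g))
    (htr : LinearMap.trace k V (Representation.asAlgebraHom V.ρ z) = 0) :
    Representation.asAlgebraHom V.ρ z = 0 := by
  obtain ⟨c, hc⟩ := V.exists_eq_smul_one_of_commute _ fun g => by
    simpa using (hz g).map (Representation.asAlgebraHom V.ρ)
  have := nontrivial_of_simple V
  rw [hc, map_smul, LinearMap.trace_one, smul_eq_mul, mul_eq_zero, Nat.cast_eq_zero] at htr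
  rw [hc, htr.resolve_right Module.finrank_pos.ne', zero_smul]

theorem eq_zero_of_forall_sum_mul_character_eq_zero [Fintype G]
    {f : G → k} (hf : ∀ g x, f (g * x * g⁻¹) = f x)
    (h : ∀ V : FDRep k G, Simple V → ∑ x, f x * V.character x = 0) (x₀ : G) :
    f x₀ = 0 := by
  set z : k[G] := ∑ x, f x • MonoidAlgebra.of k G x
  have hcentral := MonoidAlgebra.commute_sum_smul_of hf
  have hker (W : Submodule k[G] k[G]) (hW : IsSimpleModule k[G] W) :
      W ≤ LinearMap.ker (LinearMap.toSpanSingleton k[G] k[G] z) := by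
    let V := FDRep.of (Representation.ofModule' (k := k) (G := G) W)
    have := simple_of_ofModule' (k := k) (G := G) W
    have hV := V.asAlgebraHom_eq_zero_of_trace_eq_zero (fun g => hcentral _) (by
      simpa [V, z, map_sum, character] using h V this)
    intro w hw
    have hw0 := LinearMap.congr_fun hV ⟨w, hw⟩
    rw [FDRep.of_ρ', Representation.asAlgebraHom_ofModule'] at hw0
    rw [LinearMap.mem_ker, LinearMap.toSpanSingleton_apply, smul_eq_mul, ← (hcentral w).eq]
    exact congrArg Subtype.val hw0
  have htop : LinearMap.ker (LinearMap.toSpanSingleton k[G] k[G] z) = ⊤ :=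
    eq_top_iff.mpr <| (IsSemisimpleModule.sSup_simples_eq_top k[G] k[G]).ge.trans (sSup_le hker)
  have hz0 : z = 0 := by
    have h1 := LinearMap.mem_ker.mp (htop ▸ Submodule.mem_top : (1 : k[G]) ∈ _)
    rwa [LinearMap.toSpanSingleton_apply, one_smul] at h1
  have hcoeff : z.coeff x₀ = f x₀ := by
    simp only [z, MonoidAlgebra.coeff_sum, Finset.sum_apply', MonoidAlgebra.smul_of,
      MonoidAlgebra.coeff_single]
    refine (Fintype.sum_eq_single x₀ fun x hx => ?_).trans ?_
    · exact Finsupp.single_eq_of_ne hx.symm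
    · exact Finsupp.single_eq_same
  rw [← hcoeff, hz0]
  rfl

theorem character_eq_zero_of_forall_isConj [Fintype G] (V : FDRep k G) [Simple V]
    (hV : finrank k V ≠ 1) {g : G}
    (hg : ∀ x, Abelianization.of x = Abelianization.of g → IsConj g x) :
    V.character g = 0 := by
  classical
  rcases V.sum_subgroup_eq_zero_or_le_ker (commutator G) with hsum | hker
  · have hconst (c : commutator G) : V.character (g * c) = V.character g :=
      V.character_eq_of_isConj (hg _ (by simpa using Abelianization.of_eq_one_iff.mpr c.2))
    have : (Fintype.card (commutator G) : k) * V.character g = 0 := calc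
      _ = ∑ c : commutator G, V.character (g * c) := by simp [hconst]
      _ = LinearMap.trace k V (V.ρ g * ∑ c : commutator G, V.ρ c) := by
        simp [character, Finset.mul_sum, map_sum]
      _ = 0 := by rw [hsum, mul_zero, map_zero]
    exact (mul_eq_zero.mp this).resolve_left (Nat.cast_ne_zero.mpr Fintype.card_ne_zero)
  · exact absurd (V.finrank_eq_one_of_commute (V.ρ.commutator_le_ker_iff.mp hker)) hV

theorem isConj_of_forall_character_eq [Fintype G] {g x : G}
    (hx : Abelianization.of x = Abelianization.of g)
    (h : ∀ V : FDRep k G, Simple V → ∀ y, Abelianization.of y = Abelianization.of g →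
      V.character y = V.character g) :
    IsConj g x := by
  classical
  let S := Finset.univ.filter (IsConj g)
  let T := Finset.univ.filter fun y => Abelianization.of y = Abelianization.of g
  -- The weights make `∑ f = 0` without knowing `#T = |G'|`.
  let f : G → k := fun y =>
    (if y ∈ S then (T.card : k) else 0) - (if y ∈ T then (S.card : k) else 0)
  have hST : S ⊆ T := fun y hy => by
    simpa [S, T] using Abelianization.of_eq_of_isConj (Finset.mem_filter.mp hy).2
  have hf_class (c y : G) : f (c * y * c⁻¹) = f y := by
    have hconj : IsConj y (c * y * c⁻¹) := isConj_iff.mpr ⟨c, rfl⟩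
    have hS : IsConj g (c * y * c⁻¹) ↔ IsConj g y :=
      ⟨fun h => h.trans hconj.symm, (·.trans hconj)⟩
    simp only [f, S, T, Finset.mem_filter, Finset.mem_univ, true_and, hS, map_mul, map_inv,
      mul_inv_cancel_comm]
  have hf_supp (y : G) (hy : y ∉ T) : f y = 0 := by
    simp only [f, if_neg hy, if_neg fun h => hy (hST h), sub_zero]
  have hf_sum : ∑ y, f y = 0 := by
    simp only [f, Finset.sum_sub_distrib, Finset.sum_ite_mem, Finset.univ_inter, Finset.sum_const,
      nsmul_eq_mul]
    ring
  have horth (V : FDRep k G) (hV : Simple V) : ∑ y, f y * V.character y = 0 := calc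
    _ = ∑ y, f y * V.character g := Finset.sum_congr rfl fun y _ => by
      by_cases hy : y ∈ T
      · rw [h V hV y (Finset.mem_filter.mp hy).2]
      · rw [hf_supp y hy, zero_mul, zero_mul]
    _ = 0 := by rw [← Finset.sum_mul, hf_sum, zero_mul]
  have hfx := eq_zero_of_forall_sum_mul_character_eq_zero hf_class horth x
  by_contra hnx
  have hxT : x ∈ T := Finset.mem_filter.mpr ⟨Finset.mem_univ x, hx⟩
  have hxS : x ∉ S := fun h => hnx (Finset.mem_filter.mp h).2
  have hgS : g ∈ S := Finset.mem_filter.mpr ⟨Finset.mem_univ g, IsConj.refl g⟩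
  simp only [f, if_pos hxT, if_neg hxS, zero_sub, neg_eq_zero, Nat.cast_eq_zero] at hfx
  exact Finset.card_ne_zero.mpr ⟨g, hgS⟩ hfx

end FDRep

/-- A finite nonabelian group `G` is a Camina group iff every nonlinear irreducible
complex character of `G` vanishes on `G \ G'`. -/
theorem camina_iff_nonlinear_irr_vanish (G : Type) [Group G] [Fintype G]
    (hna : ¬ ∀ a b : G, a * b = b * a) :
    IsCamina G ↔
      ∀ (V : FDRep ℂ G), Simple V → Module.finrank ℂ V ≠ 1 →
        ∀ g : G, g ∉ commutator G → V.character g = 0 := by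
  constructor
  · rintro ⟨-, hC⟩ V hV hd g hg
    have hconj := hC g hg
    rw [Abelianization.setOf_isConj_eq_image_mul_commutator_iff] at hconj
    exact V.character_eq_zero_of_forall_isConj hd hconj
  · intro H
    refine ⟨hna, fun g hg => ?_⟩
    rw [Abelianization.setOf_isConj_eq_image_mul_commutator_iff]
    refine fun x hx => FDRep.isConj_of_forall_character_eq (k := ℂ) hx fun V hV y hy => ?_
    by_cases hd : Module.finrank ℂ V = 1
    · exact V.character_eq_of_finrank_eq_one hd hy
    · have hy' : y ∉ commutator G := by
        rwa [← Abelianization.of_eq_one_iff, hy, Abelianization.of_eq_one_iff]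
      rw [H V hV hd y hy', H V hV hd g hg]
end

section
/- Let P be a finite p-group acting on a nontrivial finite group Q of order coprime to p, such that C_P(x) ≤ P' for every nontrivial x ∈ Q. If P is abelian, then the action is Frobenius (every nontrivial element of P acts without nontrivial fixed points) and P is cyclic. -/
/-!
As `P` is abelian, `P' = 1` and the hypothesis on centralizers says that the action is Frobenius.
For cyclicity it suffices that all elements of order `p` of `P` lie in one cyclic subgroup.
Suppose instead that commuting `a, b` of order `p` generate `E ≅ C_p × C_p`. The number of Sylow
`q`-subgroups of `Q` divides `|Q|`, so `P` fixes one of them, `R`, and its center `A` is a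
nontrivial abelian group on which `E` acts fixed-point-freely. There the norm
`x ↦ ∏ᵢ gⁱ • x` of each `g ∈ E \ 1` is trivial, its value being fixed by `g`. Computing
`∏_{e ∈ E} e • x` once as `a`-norms of a `b`-norm and once along the `p + 1` subgroups of order `p`,
which partition `E \ 1`, gives `x ^ p = 1`; this is impossible for `x ≠ 1` since `p ∤ |Q|`.
-/

open Subgroup

section ZModExponent

variable {M : Type*} [Monoid M] {n : ℕ} {g : M}

theorem pow_zmod_val_add [NeZero n] (hg : g ^ n = 1) (i j : ZMod n) :
    g ^ (i + j).val = g ^ i.val * g ^ j.val := by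
  rw [ZMod.val_add, ← pow_eq_pow_mod _ hg, pow_add]

theorem pow_zmod_val_mul (hg : g ^ n = 1) (i j : ZMod n) :
    g ^ (i * j).val = (g ^ j.val) ^ i.val := by
  rw [ZMod.val_mul, ← pow_eq_pow_mod _ hg, ← pow_mul, mul_comm]

end ZModExponent

section FixedPointFree

variable {E A : Type*} [Group E] [CommGroup A] [MulDistribMulAction E A]

theorem prod_pow_zmod_val_smul_eq_one {n : ℕ} [NeZero n] {g : E} (hg : g ^ n = 1)
    (hfix : ∀ y : A, g • y = y → y = 1) (x : A) : ∏ i : ZMod n, g ^ i.val • x = 1 := by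
  apply hfix
  rw [Finset.smul_prod']
  refine Fintype.prod_equiv (Equiv.addLeft 1) _ _ fun i => ?_
  rw [Equiv.coe_addLeft, pow_zmod_val_add hg, ZMod.val_one_eq_one_mod, ← pow_eq_pow_mod _ hg,
    pow_one, mul_smul]

theorem pow_eq_one_of_fixedPointFree {p : ℕ} [Fact p.Prime]
    (hfree : ∀ g : E, g ≠ 1 → ∀ y : A, g • y = y → y = 1) {a b : E} (hab : Commute a b)
    (ha : a ^ p = 1) (hb : b ^ p = 1) (hb1 : b ≠ 1) (ha_mem : a ∉ zpowers b) (x : A) :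
    x ^ p = 1 := by
  have hline_norm : ∀ j : ZMod p, ∏ i : ZMod p, (a * b ^ j.val) ^ i.val • x = 1 := fun j =>
    prod_pow_zmod_val_smul_eq_one
      (by rw [(hab.pow_right _).mul_pow, ha, one_mul, ← pow_mul, mul_comm, pow_mul, hb, one_pow])
      (hfree _ fun h => ha_mem <| by
        rw [eq_inv_of_mul_eq_one_left h]; exact inv_mem (npow_mem_zpowers b _)) x
  have hline : ∀ i : ZMod p, i ≠ 0 →
      ∏ j : ZMod p, (a ^ i.val * b ^ j.val) • x = ∏ j : ZMod p, (a * b ^ j.val) ^ i.val • x :=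
    fun i hi => (Fintype.prod_equiv (Equiv.mulLeft₀ i hi) _ _ fun j => by
      rw [Equiv.mulLeft₀_apply, pow_zmod_val_mul hb, (hab.pow_right _).mul_pow]).symm
  have hcolumn : ∏ j : ZMod p, b ^ j.val • x = 1 :=
    prod_pow_zmod_val_smul_eq_one hb (hfree b hb1) x
  apply inv_eq_one.mp
  calc (x ^ p)⁻¹
        = ∏ j : ZMod p, ∏ i ∈ Finset.univ.erase (0 : ZMod p), (a * b ^ j.val) ^ i.val • x := by
        have hpunctured : ∀ j : ZMod p,
            ∏ i ∈ Finset.univ.erase (0 : ZMod p), (a * b ^ j.val) ^ i.val • x = x⁻¹ := fun j => by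
          rw [eq_inv_iff_mul_eq_one, mul_comm, ← hline_norm j,
            ← Finset.mul_prod_erase _ _ (Finset.mem_univ (0 : ZMod p)), ZMod.val_zero, pow_zero,
            one_smul]
        rw [Finset.prod_congr rfl fun j _ => hpunctured j, Finset.prod_const, Finset.card_univ,
          ZMod.card, inv_pow]
    _ = ∏ i ∈ Finset.univ.erase (0 : ZMod p), ∏ j : ZMod p, (a ^ i.val * b ^ j.val) • x := by
        rw [Finset.prod_comm]
        exact Finset.prod_congr rfl fun i hi => (hline i (Finset.ne_of_mem_erase hi)).symm
    _ = ∏ i : ZMod p, ∏ j : ZMod p, (a ^ i.val * b ^ j.val) • x := by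
        rw [← Finset.mul_prod_erase _ _ (Finset.mem_univ (0 : ZMod p))]
        simp only [ZMod.val_zero, pow_zero, one_mul, hcolumn]
    _ = 1 := by
        simp only [mul_smul, ← Finset.smul_prod', hcolumn, smul_one, Finset.prod_const_one]

end FixedPointFree

section StableSubgroup

variable {E Q : Type*} [Group E] [Group Q] [MulDistribMulAction E Q]

abbrev Subgroup.mulDistribMulActionOfStable (H : Subgroup Q)
    (hH : ∀ g : E, ∀ x ∈ H, g • x ∈ H) : MulDistribMulAction E H where
  smul g x := ⟨g • (x : Q), hH g x x.2⟩
  one_smul x := Subtype.ext (one_smul E (x : Q))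
  mul_smul g h x := Subtype.ext (mul_smul g h (x : Q))
  smul_mul g x y := Subtype.ext (smul_mul' g (x : Q) y)
  smul_one g := Subtype.ext (smul_one g)

theorem smul_mem_centralizer {H : Subgroup Q} (hH : ∀ g : E, ∀ x ∈ H, g • x ∈ H) (g : E)
    {x : Q} (hx : x ∈ centralizer H) : g • x ∈ centralizer H := by
  refine mem_centralizer_iff.mpr fun y hy => ?_
  rw [← smul_inv_smul g y, ← smul_mul', ← smul_mul',
    mem_centralizer_iff.mp hx _ (hH g⁻¹ y hy)]

theorem IsPGroup.exists_stable_sylow [Finite Q] {p : ℕ} [Fact p.Prime] (hE : IsPGroup p E)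
    (hcop : (Nat.card Q).Coprime p) (q : ℕ) [Fact q.Prime] :
    ∃ R : Sylow q Q, ∀ g : E, ∀ x ∈ (R : Subgroup Q), g • x ∈ (R : Subgroup Q) := by
  have hcard : ¬ p ∣ Nat.card (Sylow q Q) := fun h =>
    (Nat.Prime.coprime_iff_not_dvd Fact.out).mp hcop.symm
      (h.trans ((Sylow.card_dvd_index default).trans (index_dvd_card _)))
  obtain ⟨R, hR⟩ := hE.nonempty_fixed_point_of_prime_not_dvd_card (Sylow q Q) hcard
  refine ⟨R, fun g x hx => ?_⟩
  rw [← hR g, Sylow.pointwise_smul_def]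
  exact smul_mem_pointwise_smul x g _ hx

theorem IsPGroup.exists_stable_isMulCommutative [Finite Q] [Nontrivial Q] {p : ℕ} [Fact p.Prime]
    (hE : IsPGroup p E) (hcop : (Nat.card Q).Coprime p) :
    ∃ A : Subgroup Q, A ≠ ⊥ ∧ IsMulCommutative A ∧ ∀ g : E, ∀ x ∈ A, g • x ∈ A := by
  obtain ⟨q, hq, hq_dvd⟩ := Nat.exists_prime_and_dvd (Finite.one_lt_card (α := Q)).ne'
  have : Fact q.Prime := ⟨hq⟩
  obtain ⟨R, hR⟩ := hE.exists_stable_sylow hcop q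
  -- The center of `R`, seen inside `Q`.
  refine ⟨R ⊓ centralizer R, ?_, ?_, fun g x hx => ⟨hR g x hx.1, smul_mem_centralizer hR g hx.2⟩⟩
  · have : Nontrivial (R : Subgroup Q) :=
      (nontrivial_iff_ne_bot _).mpr (R.ne_bot_of_dvd_card hq_dvd)
    have := R.isPGroup'.center_nontrivial
    obtain ⟨z, hz⟩ := exists_ne (1 : center (R : Subgroup Q))
    intro h
    have hz_mem : ((z : R) : Q) ∈ (R : Subgroup Q) ⊓ centralizer R := ⟨z.1.2,
      mem_centralizer_iff.mpr fun y hy => congrArg Subtype.val (mem_center_iff.mp z.2 ⟨y, hy⟩)⟩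
    rw [h, mem_bot] at hz_mem
    exact hz (Subtype.ext (Subtype.ext hz_mem))
  · exact ⟨⟨fun x y => Subtype.ext (mem_centralizer_iff.mp y.2.2 x x.2.1)⟩⟩

end StableSubgroup

section PowKernel

variable {G : Type*} [CommGroup G] [Finite G]

theorem card_ker_powMonoidHom_mul_le (m n : ℕ) :
    Nat.card (powMonoidHom (m * n) : G →* G).ker ≤
      Nat.card (powMonoidHom m : G →* G).ker * Nat.card (powMonoidHom n : G →* G).ker := by
  set K := (powMonoidHom (m * n) : G →* G).ker
  set f := (powMonoidHom m : G →* G).domRestrict K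
  have hker : Nat.card f.ker ≤ Nat.card (powMonoidHom m : G →* G).ker := by
    rw [MonoidHom.ker_domRestrict, ← card_map_of_injective K.subtype_injective,
      subgroupOf_map_subtype]
    exact card_le_of_le inf_le_left
  have hrange : f.range ≤ (powMonoidHom n : G →* G).ker := by
    rw [MonoidHom.domRestrict_range]
    rintro _ ⟨x, hx, rfl⟩
    simpa [← pow_mul] using (MonoidHom.mem_ker.mp hx : x ^ (m * n) = 1)
  calc Nat.card K = Nat.card f.ker * Nat.card f.range := by rw [← index_ker, card_mul_index]
    _ ≤ _ := Nat.mul_le_mul hker (card_le_of_le hrange)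

variable {p : ℕ} [hp : Fact p.Prime]

theorem IsPGroup.isCyclic_of_card_ker_powMonoidHom_le (hG : IsPGroup p G)
    (h : Nat.card (powMonoidHom p : G →* G).ker ≤ p) : IsCyclic G := by
  classical
  have := Fintype.ofFinite G
  have hpow : ∀ k, Nat.card (powMonoidHom (p ^ k) : G →* G).ker ≤ p ^ k := by
    intro k
    induction k with
    | zero => simp
    | succ k ih =>
      rw [pow_succ']
      exact (card_ker_powMonoidHom_mul_le p (p ^ k)).trans (Nat.mul_le_mul h ih)
  refine isCyclic_of_card_pow_eq_one_le fun n hn => ?_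
  -- In a `p`-group, `a ^ n = 1` only depends on the `p`-part `p ^ k` of `n`.
  obtain ⟨m, hm⟩ := hG.exists_card_eq
  obtain ⟨k, -, hk⟩ := (Nat.dvd_prime_pow hp.out).mp (hm ▸ Nat.gcd_dvd_right n (Nat.card G))
  calc Finset.card {a : G | a ^ n = 1} ≤ Finset.card {a : G | a ^ p ^ k = 1} :=
        Finset.card_le_card fun a ha => by
          simp only [Finset.mem_filter, Finset.mem_univ, true_and] at ha ⊢
          exact hk ▸ pow_gcd_eq_one.mpr ⟨ha, hm ▸ pow_card_eq_one'⟩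
    _ = Nat.card (powMonoidHom (p ^ k) : G →* G).ker := by
        rw [← Fintype.card_subtype, ← Nat.card_eq_fintype_card]; rfl
    _ ≤ n := (hpow k).trans (Nat.le_of_dvd hn (hk ▸ Nat.gcd_dvd_left n _))

theorem IsPGroup.isCyclic_of_forall_mem_zpowers (hG : IsPGroup p G)
    (h : ∀ a b : G, a ^ p = 1 → b ^ p = 1 → b ≠ 1 → a ∈ zpowers b) : IsCyclic G := by
  refine hG.isCyclic_of_card_ker_powMonoidHom_le ?_
  obtain hbot | ⟨b, hb, hb1⟩ := bot_or_exists_ne_one (powMonoidHom p : G →* G).ker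
  · rw [hbot, card_bot]
    exact hp.out.one_lt.le
  · calc Nat.card (powMonoidHom p : G →* G).ker ≤ Nat.card (zpowers b) :=
          card_le_of_le fun a ha => h a b ha hb hb1
      _ = orderOf b := Nat.card_zpowers b
      _ ≤ p := orderOf_le_of_pow_eq_one hp.out.pos hb

end PowKernel

theorem IsPGroup.mem_zpowers_of_fixedPointFree {E Q : Type*} [Group E] [Group Q]
    [MulDistribMulAction E Q] [Finite Q] [Nontrivial Q] {p : ℕ} [Fact p.Prime]
    (hE : IsPGroup p E) (hcop : (Nat.card Q).Coprime p)
    (hfree : ∀ g : E, g ≠ 1 → ∀ x : Q, g • x = x → x = 1) {a b : E} (hab : Commute a b)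
    (ha : a ^ p = 1) (hb : b ^ p = 1) (hb1 : b ≠ 1) : a ∈ zpowers b := by
  by_contra ha_mem
  obtain ⟨A, hA_ne, hA_comm, hA_stable⟩ := hE.exists_stable_isMulCommutative hcop
  let := A.mulDistribMulActionOfStable hA_stable
  let : CommGroup A := { mul_comm := hA_comm.is_comm.comm }
  obtain ⟨x, hx⟩ := ne_bot_iff_exists_ne_one.mp hA_ne
  have hxp : x ^ p = 1 := pow_eq_one_of_fixedPointFree
    (fun g hg y hy => Subtype.ext (hfree g hg y (congrArg Subtype.val hy))) hab ha hb hb1 ha_mem x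
  refine hx (Subtype.ext ((Nat.Coprime.pow_left_bijective hcop).injective ?_))
  simpa using congrArg Subtype.val hxp

/-- If an abelian finite `p`-group `P` acts on a nontrivial finite `p'`-group `Q`
with `C_P(x) ≤ P'` for all nontrivial `x ∈ Q`, then the action is Frobenius and
`P` is cyclic. -/
theorem abelian_pGroup_action (p : ℕ) [Fact p.Prime] (P Q : Type*) [Group P] [Group Q]
    [Finite P] [Finite Q] [MulDistribMulAction P Q]
    (hP : IsPGroup p P) (hab : ∀ a b : P, a * b = b * a)
    (hQ : Nontrivial Q) (hcop : (Nat.card Q).Coprime p)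
    (hcent : ∀ x : Q, x ≠ 1 → MulAction.stabilizer P x ≤ commutator P) :
    (∀ g : P, g ≠ 1 → ∀ x : Q, g • x = x → x = 1) ∧ IsCyclic P := by
  let : CommGroup P := { mul_comm := hab }
  have hP' : commutator P = ⊥ := by
    rw [commutator_def, commutator_top_left_eq_bot_iff_le_center, CommGroup.center_eq_top]
  have hfree : ∀ g : P, g ≠ 1 → ∀ x : Q, g • x = x → x = 1 := fun g hg x hx => by
    by_contra hx1
    exact hg (mem_bot.mp (hP' ▸ hcent x hx1 hx))
  exact ⟨hfree, hP.isCyclic_of_forall_mem_zpowers fun a b ha hb hb1 =>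
    hP.mem_zpowers_of_fixedPointFree hcop hfree (hab a b) ha hb hb1⟩
end

section
/- Let P be a finite Camina p-group of nilpotence class 3 and let χ be a faithful irreducible character of P whose kernel does not contain Z(P). Then χ is fully ramified with respect to P/Z(P); in particular χ(1)² = |P : Z(P)|. -/
open CategoryTheory
open scoped commutatorElement

section

variable {G : Type*} [Group G]

theorem isConj_mul_commutatorElement_inv (g t : G) : IsConj g (g * ⁅g⁻¹, t⁆) :=
  isConj_iff.mpr ⟨t, by group⟩

theorem commutatorElement_mem_center_of_mem_commutator [Group.IsNilpotent G]
    (hG : Group.nilpotencyClass G ≤ 3) {g : G} (hg : g ∈ commutator G) (t : G) :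
    ⁅g, t⁆ ∈ Subgroup.center G := by
  have h3 : (⊤ : Subgroup G).lowerCentralSeries (2 + 1) = ⊥ :=
    Subgroup.lowerCentralSeries_eq_bot_iff_nilpotencyClass_le.mpr hG
  rw [Subgroup.lowerCentralSeries_succ, Subgroup.commutator_top_right_eq_bot_iff_le_center] at h3
  refine h3 ?_
  rw [Subgroup.lowerCentralSeries_succ, Subgroup.top_lowerCentralSeries_one]
  exact Subgroup.commutator_mem_commutator hg (Subgroup.mem_top t)

namespace IsCamina

theorem isConj_mul_of_notMem_commutator (hG : IsCamina G) {g z : G} (hg : g ∉ commutator G)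
    (hz : z ∈ commutator G) : IsConj g (g * z) := by
  change g * z ∈ {x | IsConj g x}
  rw [hG.2 g hg]
  exact ⟨z, hz, rfl⟩

theorem center_le_commutator (hG : IsCamina G) : Subgroup.center G ≤ commutator G := by
  intro z hzZ
  by_contra hz
  obtain ⟨a, b, hab⟩ : ∃ a b : G, a * b ≠ b * a := by simpa using hG.1
  have hconj := hG.isConj_mul_of_notMem_commutator hz
    (Subgroup.commutator_mem_commutator (Subgroup.mem_top a) (Subgroup.mem_top b))
  have := hconj.eq_of_left_mem_center hzZ
  exact hab (commutatorElement_eq_one_iff_mul_comm.mp (by simpa using this.symm))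

end IsCamina

end

namespace FDRep

variable {k G : Type*} [Field k] [Group G] (V : FDRep k G)

noncomputable def centralEnd (z : Subgroup.center G) : V ⟶ V :=
  ⟨FGModuleCat.ofHom (V.ρ z), fun g ↦ by
    ext v
    change V.ρ z (V.ρ g v) = V.ρ g (V.ρ z v)
    simp only [← Module.End.mul_apply, ← map_mul, Subgroup.mem_center_iff.mp z.2 g]⟩

theorem exists_ρ_center_eq_smul_id [IsAlgClosed k] [Simple V] :
    ∃ c : Subgroup.center G → k, ∀ z : Subgroup.center G, V.ρ z = c z • LinearMap.id := by
  choose c hc using fun z ↦ endomorphism_simple_eq_smul_id k (V.centralEnd z)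
  refine ⟨c, fun z ↦ ?_⟩
  have := congrArg (fun φ : V ⟶ V ↦ φ.hom.hom.hom) (hc z)
  rw [Action.smul_hom] at this
  exact this.symm

theorem smul_id_injective [Simple V] :
    Function.Injective fun c : k ↦ c • (LinearMap.id : V →ₗ[k] V) :=
  smul_left_injective k fun h ↦ id_nonzero V <| Action.Hom.ext <| by
    ext v; exact LinearMap.congr_fun h v

variable [IsAlgClosed k] [Simple V]

noncomputable def centralCharacter : Subgroup.center G →* k where
  toFun := V.exists_ρ_center_eq_smul_id.choose
  map_one' := V.smul_id_injective <| by
    change _ • _ = _ • _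
    rw [← V.exists_ρ_center_eq_smul_id.choose_spec]
    simp [Module.End.one_eq_id]
  map_mul' z w := V.smul_id_injective <| by
    have hc := V.exists_ρ_center_eq_smul_id.choose_spec
    change _ • _ = _ • _
    rw [← hc, mul_smul, ← hc, Subgroup.coe_mul, map_mul, hc z]
    rfl

theorem ρ_coe_center (z : Subgroup.center G) : V.ρ z = V.centralCharacter z • LinearMap.id :=
  V.exists_ρ_center_eq_smul_id.choose_spec z

theorem ρ_mul_coe_center (g : G) (z : Subgroup.center G) :
    V.ρ (g * z) = V.centralCharacter z • V.ρ g := by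
  rw [map_mul, ρ_coe_center, mul_smul_comm]
  rfl

theorem character_mul_coe_center (g : G) (z : Subgroup.center G) :
    V.character (g * z) = V.centralCharacter z * V.character g := by
  rw [character, ρ_mul_coe_center, map_smul, smul_eq_mul, character]

theorem character_coe_center (z : Subgroup.center G) :
    V.character z = V.character 1 * V.centralCharacter z := by
  rw [← one_mul (z : G), character_mul_coe_center, mul_comm]

theorem centralCharacter_eq_one_iff {z : Subgroup.center G} :
    V.centralCharacter z = 1 ↔ ∀ v : V, V.ρ z v = v := by
  rw [← V.smul_id_injective.eq_iff, LinearMap.ext_iff, ρ_coe_center]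
  simp

theorem character_eq_zero_of_isConj_mul {g : G} {z : Subgroup.center G}
    (hz : V.centralCharacter z ≠ 1) (hg : IsConj g (g * z)) : V.character g = 0 := by
  obtain ⟨c, hc⟩ := isConj_iff.mp hg
  have h := V.character_mul_coe_center g z
  rw [← hc, char_conj] at h
  by_contra hg0
  exact hz ((mul_eq_right₀ hg0).mp h.symm)

section Orthogonality

variable [Fintype G] [Invertible (Nat.card G : k)]

theorem sum_character_mul_character_inv :
    ∑ g, V.character g * V.character g⁻¹ = Nat.card G := by
  classical
  have h := char_orthonormal V V
  rw [if_pos ⟨Iso.refl V⟩, ← invOf_eq_inv, invOf_mul_eq_iff_eq_mul_left] at h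
  simpa using h

theorem character_one_sq_mul_card_center
    (h : ∀ g ∉ Subgroup.center G, V.character g = 0) :
    V.character 1 ^ 2 * Nat.card (Subgroup.center G) = Nat.card G := by
  classical
  have hZ (z : Subgroup.center G) : V.character z * V.character (z : G)⁻¹ = V.character 1 ^ 2 := by
    rw [← Subgroup.coe_inv, character_coe_center, character_coe_center, mul_mul_mul_comm,
      ← map_mul, mul_inv_cancel, map_one, mul_one, sq]
  rw [← V.sum_character_mul_character_inv,
    ← Finset.sum_filter_of_ne (p := (· ∈ Subgroup.center G))
      fun g _ hg ↦ by_contra fun hgZ ↦ hg (by rw [h g hgZ, zero_mul]),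
    Finset.sum_subtype (p := (· ∈ Subgroup.center G)) (F := inferInstance) _ (by simp)]
  simp only [hZ, Finset.sum_const, Finset.card_univ, nsmul_eq_mul, Fintype.card_eq_nat_card,
    mul_comm]

end Orthogonality

end FDRep

theorem IsCamina.character_eq_zero_of_notMem_center {k G : Type*} [Field k] [IsAlgClosed k]
    [Group G] [Group.IsNilpotent G] (hG : IsCamina G) (h3 : Group.nilpotencyClass G ≤ 3)
    (V : FDRep k G) [Simple V] (hfaith : V.centralCharacter.ker = ⊥)
    (hker : V.centralCharacter ≠ 1) {g : G} (hg : g ∉ Subgroup.center G) :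
    V.character g = 0 := by
  by_cases hgc : g ∈ commutator G
  · have hginv : g⁻¹ ∉ Subgroup.center G := mt (Subgroup.center G).inv_mem_iff.mp hg
    obtain ⟨t, ht⟩ := not_forall.mp (mt Subgroup.mem_center_iff.mpr hginv)
    let z : Subgroup.center G :=
      ⟨⁅g⁻¹, t⁆, commutatorElement_mem_center_of_mem_commutator h3 (inv_mem hgc) t⟩
    have hz1 : z ≠ 1 := fun h ↦
      ht (commutatorElement_eq_one_iff_mul_comm.mp (congrArg Subtype.val h)).symm
    have hz : V.centralCharacter z ≠ 1 := fun h ↦ hz1 <| by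
      rwa [← MonoidHom.mem_ker, hfaith, Subgroup.mem_bot] at h
    exact V.character_eq_zero_of_isConj_mul hz (isConj_mul_commutatorElement_inv g t)
  · obtain ⟨z, hz⟩ := DFunLike.ne_iff.mp hker
    exact V.character_eq_zero_of_isConj_mul hz
      (hG.isConj_mul_of_notMem_commutator hgc (hG.center_le_commutator z.2))

theorem camina_class3_fully_ramified_general
    (P : Type) [Group P] [Fintype P]
    (hCam : IsCamina P) [Group.IsNilpotent P]
    (h3 : Group.nilpotencyClass P = 3)
    (V : FDRep ℂ P) (hsimple : Simple V)
    (hfaith : ∀ g : P, (∀ v : V, V.ρ g v = v) → g = 1)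
    (hker : ¬ (Subgroup.center P : Set P) ⊆ {g : P | ∀ v : V, V.ρ g v = v}) :
    (∃ lam : Subgroup.center P →* ℂ,
        ∀ z : Subgroup.center P, V.character (z : P) = V.character 1 * lam z) ∧
      (V.character 1) ^ 2 = ((Subgroup.center P).index : ℂ) := by
  refine ⟨⟨V.centralCharacter, V.character_coe_center⟩, ?_⟩
  have hfaithZ : V.centralCharacter.ker = ⊥ := eq_bot_iff.mpr fun z hz ↦
    Subtype.ext <| hfaith z (V.centralCharacter_eq_one_iff.mp hz)
  have hkerZ : V.centralCharacter ≠ 1 := fun h ↦ hker fun z hz ↦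
    V.centralCharacter_eq_one_iff (z := ⟨z, hz⟩) |>.mp (by rw [h, MonoidHom.one_apply])
  have : Invertible (Nat.card P : ℂ) := invertibleOfNonzero (Nat.cast_ne_zero.mpr Nat.card_pos.ne')
  have hcard := V.character_one_sq_mul_card_center fun g ↦
    hCam.character_eq_zero_of_notMem_center h3.le V hfaithZ hkerZ
  rw [← (Subgroup.center P).card_mul_index, Nat.cast_mul, mul_comm (Nat.card _ : ℂ)] at hcard
  exact mul_right_cancel₀ (Nat.cast_ne_zero.mpr Nat.card_pos.ne') hcard

/-- In a finite Camina `p`-group of class 3, a faithful irreducible (complex)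
character whose kernel does not contain the center is fully ramified with respect to
`P/Z(P)`: its restriction to `Z(P)` is a multiple of a single linear character, and
`χ(1)² = |P : Z(P)|`. -/
theorem camina_class3_fully_ramified (p : ℕ) [Fact p.Prime]
    (P : Type) [Group P] [Fintype P]
    (hP : IsPGroup p P) (hCam : IsCamina P) [Group.IsNilpotent P]
    (h3 : Group.nilpotencyClass P = 3)
    (V : FDRep ℂ P) (hsimple : Simple V)
    (hfaith : ∀ g : P, (∀ v : V, V.ρ g v = v) → g = 1)
    (hker : ¬ (Subgroup.center P : Set P) ⊆ {g : P | ∀ v : V, V.ρ g v = v}) :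
    (∃ lam : Subgroup.center P →* ℂ,
        ∀ z : Subgroup.center P, V.character (z : P) = V.character 1 * lam z) ∧
      (V.character 1) ^ 2 = ((Subgroup.center P).index : ℂ) :=
  camina_class3_fully_ramified_general P hCam h3 V hsimple hfaith hker
end
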